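/- Let f: M → M be a smooth map of a closed, oriented, flat Riemannian n-manifold M. Then |L(f)| ≤ C (2π)^{-n/2} vol(M) (‖df‖ + 1)^n, where ‖df‖ = sup_{x∈M} ‖df_x‖ (operator norm) and C > 0 is a constant depending only on the choice of cutoff diffeomorphism ρ with sup_z e^{-ρ²(z)} ρ'(z) ≤ C. -/

import Mathlib

open scoped Manifold
open Real MeasureTheory

lemma abs_det_le_norm_pow {E : Type*} [NormedAddCommGroup E] [NormedSpace ℝ E]
    [FiniteDimensional ℝ E] (A : E →L[ℝ] E) :
    |LinearMap.det (A : E →ₗ[ℝ] E)| ≤ ‖A‖ ^ Module.finrank ℝ E := by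
  borelize E
  set μ := (Module.Basis.ofVectorSpace ℝ E).addHaar
  have hsub : A '' Metric.closedBall 0 1 ⊆ Metric.closedBall 0 ‖A‖ := by
    rintro _ ⟨x, hx, rfl⟩
    simp only [Metric.mem_closedBall, dist_zero_right] at hx ⊢
    calc ‖A x‖ ≤ ‖A‖ * ‖x‖ := A.le_opNorm x
      _ ≤ ‖A‖ * 1 := by gcongr
      _ = ‖A‖ := mul_one _
  have h1 : μ (A '' Metric.closedBall 0 1)
      = ENNReal.ofReal |LinearMap.det (A : E →ₗ[ℝ] E)| * μ (Metric.closedBall 0 1) :=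
    μ.addHaar_image_continuousLinearMap A _
  have h2 := measure_mono (μ := μ) hsub
  rw [h1, μ.addHaar_closedBall (0:E) zero_le_one,
    μ.addHaar_closedBall (0:E) (norm_nonneg A)] at h2
  simp only [one_pow, ENNReal.ofReal_one, one_mul] at h2
  have hb0 : μ (Metric.ball (0:E) 1) ≠ 0 :=
    (Metric.measure_ball_pos μ 0 one_pos).ne'
  have hbt : μ (Metric.ball (0:E) 1) ≠ ⊤ := measure_ball_lt_top.ne
  have h3 : ENNReal.ofReal |LinearMap.det (A : E →ₗ[ℝ] E)|
      ≤ ENNReal.ofReal (‖A‖ ^ Module.finrank ℝ E) :=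
    (ENNReal.mul_le_mul_iff_left hb0 hbt).mp h2
  rw [ENNReal.ofReal_le_ofReal_iff (by positivity)] at h3
  exact h3

/- STATEMENT 8 (Proposition 2.8) -/
theorem lefschetz_upper_bound_flat
    {E : Type*} [NormedAddCommGroup E] [NormedSpace ℝ E] [FiniteDimensional ℝ E]
    {H : Type*} [TopologicalSpace H] (I : ModelWithCorners ℝ E H)
    {M : Type*} [MetricSpace M] [ChartedSpace H M] [IsManifold I (⊤ : ℕ∞) M]
    [CompactSpace M] [MeasurableSpace M] [BorelSpace M]
    (μ : Measure M) [IsFiniteMeasure μ]                   -- Riemannian volume dvol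
    (n : ℕ) (hn : Module.finrank ℝ E = n)
    (f : M → M) (hf : ContMDiff I I (⊤ : ℕ∞) f)
    (ε : ℝ) (hε : 0 < ε)
    (ρ ρ' : ℝ → ℝ)
    (hρ : ∀ t ∈ Set.Ico (0:ℝ) ε, HasDerivAt ρ (ρ' t) t)
    (Par : M → E →L[ℝ] E)                                 -- parallel translation ∥
    (hPar : ∀ (x : M) (v : E), ‖Par x v‖ = ‖v‖)
    (C : ℝ) (hC0 : 0 < C)
    (hC : ∀ z ∈ Set.Ico (0:ℝ) ε, 0 ≤ Real.exp (-(ρ z)^2) * ρ' z ∧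
            Real.exp (-(ρ z)^2) * ρ' z ≤ C)               -- choice of cutoff ρ
    (K : ℝ) (hK0 : 0 ≤ K)
    (hK : ∀ x : M, ‖show E →L[ℝ] E from mfderiv I I f x‖ ≤ K)  -- K = ‖df‖
    (L : ℝ)
    (hform : L = (2 * π) ^ (-(n:ℝ)/2) *
      ∫ x, (if dist x (f x) < Real.sqrt 2 * ε then
              Real.exp (-(ρ (dist x (f x) / Real.sqrt 2))^2) *
                ρ' (dist x (f x) / Real.sqrt 2) *
                LinearMap.det ((LinearMap.id : E →ₗ[ℝ] E) -
                  ((show E →L[ℝ] E from mfderiv I I f x).comp (Par x)).toLinearMap)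
            else 0) ∂μ) :
    |L| ≤ C * (2 * π) ^ (-(n:ℝ)/2) * (μ Set.univ).toReal * (K + 1) ^ n := by
  have h2π : (0:ℝ) < (2 * π) ^ (-(n:ℝ)/2) :=
    Real.rpow_pos_of_pos (by positivity) _
  -- pointwise bound
  have hbound : ∀ x : M,
      ‖(if dist x (f x) < Real.sqrt 2 * ε then
          Real.exp (-(ρ (dist x (f x) / Real.sqrt 2))^2) *
            ρ' (dist x (f x) / Real.sqrt 2) *
            LinearMap.det ((LinearMap.id : E →ₗ[ℝ] E) -
              ((show E →L[ℝ] E from mfderiv I I f x).comp (Par x)).toLinearMap)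
        else 0)‖ ≤ C * (K + 1) ^ n := by
    intro x
    have hCK : 0 ≤ C * (K + 1) ^ n := by positivity
    by_cases hd : dist x (f x) < Real.sqrt 2 * ε
    · simp only [if_pos hd, Real.norm_eq_abs]
      set z := dist x (f x) / Real.sqrt 2 with hz
      have hs2 : (0:ℝ) < Real.sqrt 2 := Real.sqrt_pos.2 (by norm_num)
      have hzmem : z ∈ Set.Ico (0:ℝ) ε := by
        constructor
        · exact div_nonneg dist_nonneg hs2.le
        · rw [hz, div_lt_iff₀ hs2]
          linarith [hd, mul_comm ε (Real.sqrt 2)]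
      obtain ⟨hg0, hgC⟩ := hC z hzmem
      -- determinant bound
      set A : E →L[ℝ] E :=
        ContinuousLinearMap.id ℝ E -
          ((show E →L[ℝ] E from mfderiv I I f x).comp (Par x)) with hA
      have hcoe : ((LinearMap.id : E →ₗ[ℝ] E) -
          ((show E →L[ℝ] E from mfderiv I I f x).comp (Par x)).toLinearMap)
          = (A : E →ₗ[ℝ] E) := by
        simp [hA]
      have hPnorm : ‖Par x‖ ≤ 1 :=
        ContinuousLinearMap.opNorm_le_bound _ zero_le_one (fun v => by
          rw [hPar x v, one_mul])
      have hAnorm : ‖A‖ ≤ K + 1 := by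
        calc ‖A‖ ≤ ‖ContinuousLinearMap.id ℝ E‖ +
            ‖(show E →L[ℝ] E from mfderiv I I f x).comp (Par x)‖ := norm_sub_le _ _
          _ ≤ 1 + K := by
              gcongr
              · exact ContinuousLinearMap.norm_id_le
              · calc ‖(show E →L[ℝ] E from mfderiv I I f x).comp (Par x)‖
                    ≤ ‖show E →L[ℝ] E from mfderiv I I f x‖ * ‖Par x‖ :=
                      ContinuousLinearMap.opNorm_comp_le _ _
                  _ ≤ K * 1 := mul_le_mul (hK x) hPnorm (norm_nonneg _)
                      ((norm_nonneg _).trans (hK x))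
                  _ = K := mul_one K
          _ = K + 1 := by ring
      have hdet : |LinearMap.det ((LinearMap.id : E →ₗ[ℝ] E) -
          ((show E →L[ℝ] E from mfderiv I I f x).comp (Par x)).toLinearMap)|
          ≤ (K + 1) ^ n := by
        rw [hcoe]
        calc |LinearMap.det (A : E →ₗ[ℝ] E)| ≤ ‖A‖ ^ Module.finrank ℝ E :=
              abs_det_le_norm_pow A
          _ = ‖A‖ ^ n := by rw [hn]
          _ ≤ (K + 1) ^ n := pow_le_pow_left₀ (norm_nonneg A) hAnorm n
      rw [abs_mul]
      have : |Real.exp (-(ρ z)^2) * ρ' z| ≤ C := by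
        rw [abs_of_nonneg hg0]; exact hgC
      exact mul_le_mul this hdet (abs_nonneg _) hC0.le
    · simp only [if_neg hd, norm_zero]
      exact hCK
  have hint := norm_integral_le_of_norm_le_const (μ := μ) (ae_of_all μ hbound)
  rw [Real.norm_eq_abs] at hint
  rw [hform, abs_mul, abs_of_pos h2π]
  calc (2 * π) ^ (-(n:ℝ)/2) * |∫ x, (if dist x (f x) < Real.sqrt 2 * ε then
          Real.exp (-(ρ (dist x (f x) / Real.sqrt 2))^2) *
            ρ' (dist x (f x) / Real.sqrt 2) *
            LinearMap.det ((LinearMap.id : E →ₗ[ℝ] E) -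
              ((show E →L[ℝ] E from mfderiv I I f x).comp (Par x)).toLinearMap)
        else 0) ∂μ|
      ≤ (2 * π) ^ (-(n:ℝ)/2) * (C * (K + 1) ^ n * (μ Set.univ).toReal) := by gcongr; exact hint
    _ = C * (2 * π) ^ (-(n:ℝ)/2) * (μ Set.univ).toReal * (K + 1) ^ n := by ring
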